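/- arXiv:2505.23629 — 2 statements merged into one kernel-verified Lean document; each statement's English description precedes it below -/
import Mathlib

section
/- Let A, B ∈ ℂ^{n×n} and let M be the 2n×2n block matrix [[A, B], [-conj(B), conj(A)]]. Then the characteristic polynomial of M has real coefficients; consequently the non-real eigenvalues of M occur in conjugate pairs and every real eigenvalue has even algebraic multiplicity. -/
/-!
Let `J = [[0, -1], [1, 0]]` be the symplectic matrix. The block shape of `M` says exactly that
`M J = J conj(M)`, so `conj(M)` is similar to `M` and `charpoly M` is fixed by conjugation.
For the multiplicities, `T v = J conj(v)` is conjugate-linear with `T² = -1` and commutes with `M`,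
so it preserves the generalized eigenspace of every real eigenvalue. A space carrying such a
quaternionic structure has even dimension: for `v ≠ 0` the vectors `v, T v` span a `T`-stable plane,
and `T` descends to the quotient by it.
-/

open Matrix Polynomial Module

section QuaternionicStructure

variable {E : Type*} [AddCommGroup E] [Module ℂ E]

theorem smul_ne_apply_of_apply_apply_eq_neg (T : E →ₗ⋆[ℂ] E) (hT : ∀ x, T (T x) = -x)
    {v : E} (hv : v ≠ 0) (a : ℂ) : a • v ≠ T v := by
  intro h
  have hsq : ((Complex.normSq a : ℂ) + 1) • v = 0 := by
    have := congrArg T h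
    rw [hT, LinearMap.map_smulₛₗ, ← h, smul_smul, ← Complex.normSq_eq_conj_mul_self] at this
    rw [add_smul, one_smul, this, neg_add_cancel]
  have hne : (Complex.normSq a : ℂ) + 1 ≠ 0 := by
    exact_mod_cast (add_pos_of_nonneg_of_pos (Complex.normSq_nonneg a) one_pos).ne'
  exact hv ((smul_eq_zero.mp hsq).resolve_left hne)

theorem even_finrank_of_apply_apply_eq_neg [FiniteDimensional ℂ E] (T : E →ₗ⋆[ℂ] E)
    (hT : ∀ x, T (T x) = -x) : Even (finrank ℂ E) := by
  induction hd : finrank ℂ E using Nat.strong_induction_on generalizing E with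
  | _ d ih =>
  obtain rfl | hd0 := eq_or_ne d 0
  · exact Even.zero
  obtain ⟨v, hv⟩ : ∃ v : E, v ≠ 0 :=
    finrank_pos_iff_exists_ne_zero.mp (hd ▸ Nat.pos_of_ne_zero hd0)
  have hind : LinearIndependent ℂ ![v, T v] :=
    (LinearIndependent.pair_iff' hv).mpr (smul_ne_apply_of_apply_apply_eq_neg T hT hv)
  set S := Submodule.span ℂ (Set.range ![v, T v])
  have hS : S ≤ S.comap T := by
    rw [Submodule.span_le, Set.range_subset_iff]
    intro i
    fin_cases i
    · exact Submodule.subset_span ⟨1, rfl⟩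
    · show T (T v) ∈ S
      rw [hT]
      exact S.neg_mem (Submodule.subset_span ⟨0, rfl⟩)
  have hquot : finrank ℂ (E ⧸ S) + 2 = d := by
    rw [← hd, ← S.finrank_quotient_add_finrank, finrank_span_eq_card hind, Fintype.card_fin]
  have hTquot : ∀ x, S.mapQ S T hS (S.mapQ S T hS x) = -x := by
    rintro ⟨x⟩
    exact congrArg S.mkQ (hT x)
  obtain ⟨k, hk⟩ := ih _ (by omega) (S.mapQ S T hS) hTquot rfl
  exact ⟨k + 1, by omega⟩

end QuaternionicStructure

theorem Module.End.apply_mem_maxGenEigenspace_of_comp_eq {K E : Type*} [Field K]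
    [AddCommGroup E] [Module K E] {σ : K →+* K} (f : Module.End K E) (T : E →ₛₗ[σ] E)
    (hfT : f.comp T = T.comp f) {μ : K} (hμ : σ μ = μ) {x : E}
    (hx : x ∈ f.maxGenEigenspace μ) : T x ∈ f.maxGenEigenspace μ := by
  have hcomm : (f - μ • 1).comp T = T.comp (f - μ • 1) := by
    ext y
    have := LinearMap.congr_fun hfT y
    simp only [LinearMap.comp_apply] at this
    simp [this, hμ]
  rw [Module.End.mem_maxGenEigenspace] at hx ⊢
  obtain ⟨k, hk⟩ := hx
  refine ⟨k, ?_⟩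
  rw [← LinearMap.comp_apply, Module.End.commute_pow_left_of_commute hcomm, LinearMap.comp_apply,
    hk, map_zero]

theorem Matrix.charpoly_eq_of_mul_eq_mul {ι R : Type*} [Fintype ι] [DecidableEq ι] [CommRing R]
    {M N J K : Matrix ι ι R} (hJK : J * K = 1) (h : N * J = J * M) :
    N.charpoly = M.charpoly :=
  calc N.charpoly = (J * (M * K)).charpoly := by rw [← mul_assoc, ← h, mul_assoc, hJK, mul_one]
    _ = (M * K * J).charpoly := charpoly_mul_comm _ _
    _ = M.charpoly := by rw [mul_assoc, mul_eq_one_comm.mp hJK, mul_one]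

theorem Matrix.star_mulVec_eq_map_mulVec {ι R : Type*} [Fintype ι] [CommSemiring R] [StarRing R]
    (M : Matrix ι ι R) (v : ι → R) : star (M *ᵥ v) = M.map (starRingEnd R) *ᵥ star v := by
  ext i
  exact (starRingEnd R).map_mulVec M v i

theorem Matrix.fromBlocks_mul_J {m R : Type*} [Fintype m] [DecidableEq m] [CommRing R]
    [StarRing R] (A B : Matrix m m R) :
    fromBlocks A B (-(B.map (starRingEnd R))) (A.map (starRingEnd R)) * J m R =
      J m R * (fromBlocks A B (-(B.map (starRingEnd R))) (A.map (starRingEnd R))).map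
        (starRingEnd R) := by
  simp [J, fromBlocks_multiply, fromBlocks_map, Matrix.map_map, Matrix.map_neg, Function.comp_def]

namespace Matrix

variable {ι : Type*} [Fintype ι] [DecidableEq ι]

def mulVecStarₗ (J : Matrix ι ι ℂ) : (ι → ℂ) →ₗ⋆[ℂ] (ι → ℂ) :=
  (toLin' J).comp (starLinearEquiv ℂ).toLinearMap

theorem mulVecStarₗ_apply (J : Matrix ι ι ℂ) (v : ι → ℂ) : J.mulVecStarₗ v = J *ᵥ star v :=
  rfl

variable {M J : Matrix ι ι ℂ}

theorem mulVecStarₗ_mulVecStarₗ (hJ : J * J.map (starRingEnd ℂ) = -1) (v : ι → ℂ) :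
    J.mulVecStarₗ (J.mulVecStarₗ v) = -v := by
  simp only [mulVecStarₗ_apply, star_mulVec_eq_map_mulVec, star_star, mulVec_mulVec, hJ,
    neg_mulVec, one_mulVec]

theorem toLin'_comp_mulVecStarₗ (hMJ : M * J = J * M.map (starRingEnd ℂ)) :
    (toLin' M).comp J.mulVecStarₗ = J.mulVecStarₗ.comp (toLin' M) := by
  ext v : 1
  simp only [LinearMap.comp_apply, toLin'_apply, mulVecStarₗ_apply, mulVec_mulVec, hMJ,
    star_mulVec_eq_map_mulVec]

theorem charpoly_map_conj_eq (hJ : J * J.map (starRingEnd ℂ) = -1)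
    (hMJ : M * J = J * M.map (starRingEnd ℂ)) :
    M.charpoly.map (starRingEnd ℂ) = M.charpoly := by
  rw [← charpoly_map]
  exact (charpoly_eq_of_mul_eq_mul (K := -J.map (starRingEnd ℂ)) (by rw [mul_neg, hJ, neg_neg])
    hMJ).symm

theorem even_rootMultiplicity_charpoly (hJ : J * J.map (starRingEnd ℂ) = -1)
    (hMJ : M * J = J * M.map (starRingEnd ℂ)) {μ : ℂ} (hμ : μ.im = 0) :
    Even (M.charpoly.rootMultiplicity μ) := by
  rw [← charpoly_toLin', ← LinearMap.finrank_maxGenEigenspace_eq]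
  have hV : ∀ x ∈ Module.End.maxGenEigenspace (toLin' M) μ,
      J.mulVecStarₗ x ∈ Module.End.maxGenEigenspace (toLin' M) μ := fun _ hx =>
    Module.End.apply_mem_maxGenEigenspace_of_comp_eq _ _ (toLin'_comp_mulVecStarₗ hMJ)
      (Complex.conj_eq_iff_im.mpr hμ) hx
  exact even_finrank_of_apply_apply_eq_neg (J.mulVecStarₗ.restrict hV)
    fun x => Subtype.ext (mulVecStarₗ_mulVecStarₗ hJ x)

end Matrix

/-- For complex `A, B` and `M = [[A, B], [-conj B, conj A]]`, the characteristic
polynomial of `M` has real coefficients; consequently the eigenvalues of `M`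
occur in conjugate pairs (with matching multiplicities), and in particular every
real eigenvalue has even algebraic multiplicity. -/
theorem block_conj_charpoly_real_coeff {n : ℕ} (A B : Matrix (Fin n) (Fin n) ℂ) :
    let M : Matrix (Fin n ⊕ Fin n) (Fin n ⊕ Fin n) ℂ :=
      Matrix.fromBlocks A B (-(B.map (starRingEnd ℂ))) (A.map (starRingEnd ℂ))
    (∀ i, (M.charpoly.coeff i).im = 0) ∧
      (∀ μ : ℂ, M.charpoly.rootMultiplicity μ =
        M.charpoly.rootMultiplicity (starRingEnd ℂ μ)) ∧
      (∀ μ : ℂ, μ.im = 0 → Even (M.charpoly.rootMultiplicity μ)) := by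
  intro M
  have hJ : J (Fin n) ℂ * (J (Fin n) ℂ).map (starRingEnd ℂ) = -1 := by rw [map_J, J_squared]
  have hMJ : M * J (Fin n) ℂ = J (Fin n) ℂ * M.map (starRingEnd ℂ) := fromBlocks_mul_J A B
  have hreal := charpoly_map_conj_eq hJ hMJ
  refine ⟨fun i => ?_, fun μ => ?_, fun μ hμ => even_rootMultiplicity_charpoly hJ hMJ hμ⟩
  · rw [← Complex.conj_eq_iff_im, ← coeff_map, hreal]
  · conv_rhs => rw [← hreal]
    exact eq_rootMultiplicity_map (starRingEnd ℂ).injective μ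
end

section
/- Define on Gr_{n,k}(ℂ) the function d(P, Q) = (1/2) √(Σᵢ arg(λᵢ((I-2Q)(I-2P)))²), where λᵢ are the eigenvalues of the unitary matrix (I-2Q)(I-2P) and arg takes values in [-π, π]. Then d(P, Q) = 0 if and only if P = Q, and d is symmetric: d(P, Q) = d(Q, P). -/
/-!
`A = I - 2P` and `B = I - 2Q` are Hermitian involutions, hence unitary, and so is `U = BA`.
The distance vanishes iff every eigenvalue of `U` has argument `0`; as these eigenvalues lie on
the unit circle, this means the spectrum of `U` is `{1}`, and a normal matrix with spectrum `{1}` is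
the identity (continuous functional calculus, for which matrices are given the C⋆-algebra structure
of the `L²` operator norm). Finally `BA = 1 = AA` forces `B = A`, i.e. `P = Q`.
Symmetry holds because `AB` and `BA` have the same characteristic polynomial.
-/

open Matrix

/-- The Grassmannian distance
`d(P, Q) = (1/2) √(∑ᵢ arg(λᵢ((I-2Q)(I-2P)))²)`, where the `λᵢ` are the
eigenvalues (with multiplicity) of the unitary matrix `(I-2Q)(I-2P)` and
`arg` takes values in `[-π, π]`. -/
noncomputable def grDist {n : ℕ} (P Q : Matrix (Fin n) (Fin n) ℂ) : ℝ :=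
  (1 / 2) * Real.sqrt
    (((((1 - (2 : ℂ) • Q) * (1 - (2 : ℂ) • P)).charpoly.roots).map
      (fun μ => (Complex.arg μ) ^ 2)).sum)

theorem Multiset.sum_eq_zero_iff_of_nonneg {α : Type*} [AddCommMonoid α] [PartialOrder α]
    [IsOrderedAddMonoid α] {s : Multiset α} (hs : ∀ x ∈ s, 0 ≤ x) :
    s.sum = 0 ↔ ∀ x ∈ s, x = 0 := by
  induction s using Multiset.induction_on with
  | empty => simp
  | cons a s ih =>
    simp only [Multiset.forall_mem_cons] at hs ⊢
    rw [Multiset.sum_cons, add_eq_zero_iff_of_nonneg hs.1 (Multiset.sum_nonneg hs.2), ih hs.2]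

namespace Matrix

variable {ι : Type*} [Fintype ι] [DecidableEq ι]

theorem one_sub_two_smul_mem_unitary {P : Matrix ι ι ℂ} (hP2 : P * P = P) (hPh : Pᴴ = P) :
    1 - (2 : ℂ) • P ∈ unitary (Matrix ι ι ℂ) := by
  have hP : IsStarProjection P := ⟨hP2, hPh⟩
  convert (-⟨_, hP.two_mul_sub_one_mem_unitary⟩ : unitary (Matrix ι ι ℂ)).prop using 1
  rw [Unitary.coe_neg, neg_sub, two_smul, two_mul]

open scoped Matrix.Norms.L2Operator in
theorem forall_arg_roots_charpoly_eq_zero_iff {U : Matrix ι ι ℂ}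
    (hU : U ∈ unitary (Matrix ι ι ℂ)) :
    (∀ μ ∈ U.charpoly.roots, Complex.arg μ = 0) ↔ U = 1 := by
  constructor
  · intro h
    refine CFC.eq_one_of_spectrum_subset_one (R := ℂ) U fun μ hμ => ?_
    have hroot : μ ∈ U.charpoly.roots :=
      (Polynomial.mem_roots U.charpoly_monic.ne_zero).2 (mem_spectrum_iff_isRoot_charpoly.1 hμ)
    rw [Set.mem_singleton_iff, ← Complex.norm_mul_exp_arg_mul_I μ,
      spectrum.norm_eq_one_of_unitary hU hμ, h μ hroot]
    simp
  · rintro rfl μ hμ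
    simp_all [charpoly_one, Polynomial.roots_pow, sub_eq_zero]

end Matrix

theorem grDist_comm {n : ℕ} (P Q : Matrix (Fin n) (Fin n) ℂ) : grDist P Q = grDist Q P := by
  rw [grDist, grDist, charpoly_mul_comm]

theorem grDist_eq_zero_iff {n : ℕ} (P Q : Matrix (Fin n) (Fin n) ℂ) :
    grDist P Q = 0 ↔
      ∀ μ ∈ ((1 - (2 : ℂ) • Q) * (1 - (2 : ℂ) • P)).charpoly.roots, Complex.arg μ = 0 := by
  have hsq : ∀ x ∈ ((1 - (2 : ℂ) • Q) * (1 - (2 : ℂ) • P)).charpoly.roots.map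
      (fun μ => Complex.arg μ ^ 2), 0 ≤ x := by
    simp only [Multiset.forall_mem_map_iff]
    exact fun μ _ => sq_nonneg _
  rw [grDist, mul_eq_zero, Real.sqrt_eq_zero (Multiset.sum_nonneg hsq),
    Multiset.sum_eq_zero_iff_of_nonneg hsq, Multiset.forall_mem_map_iff]
  simp

theorem grDist_eq_zero_iff_and_symm_general {n : ℕ}
    (P Q : Matrix (Fin n) (Fin n) ℂ)
    (hP2 : P * P = P) (hPh : Pᴴ = P)
    (hQ2 : Q * Q = Q) (hQh : Qᴴ = Q) :
    (grDist P Q = 0 ↔ P = Q) ∧ grDist P Q = grDist Q P := by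
  have hA := one_sub_two_smul_mem_unitary hP2 hPh
  have hB := one_sub_two_smul_mem_unitary hQ2 hQh
  have hAA : (1 - (2 : ℂ) • P) * (1 - (2 : ℂ) • P) = 1 := by
    simpa [star_eq_conjTranspose, hPh] using Unitary.star_mul_self_of_mem hA
  refine ⟨?_, grDist_comm P Q⟩
  rw [grDist_eq_zero_iff, forall_arg_roots_charpoly_eq_zero_iff (mul_mem hB hA)]
  refine ⟨fun h => ?_, fun h => h ▸ hAA⟩
  have hBA : 1 - (2 : ℂ) • Q = 1 - (2 : ℂ) • P := left_inv_eq_right_inv h hAA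
  exact (smul_right_injective _ two_ne_zero (sub_right_injective hBA)).symm

/-- On `Gr_{n,k}(ℂ)`, the distance `d` vanishes exactly on the diagonal and is
symmetric: `d(P,Q) = 0 ↔ P = Q`, and `d(P,Q) = d(Q,P)`. -/
theorem grDist_eq_zero_iff_and_symm {n k : ℕ}
    (P Q : Matrix (Fin n) (Fin n) ℂ)
    (hP2 : P * P = P) (hPh : Pᴴ = P) (hPrank : P.rank = k)
    (hQ2 : Q * Q = Q) (hQh : Qᴴ = Q) (hQrank : Q.rank = k) :
    (grDist P Q = 0 ↔ P = Q) ∧ grDist P Q = grDist Q P :=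
  grDist_eq_zero_iff_and_symm_general P Q hP2 hPh hQ2 hQh
end
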